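/- arXiv:1512.02113 — 9 statements merged into one kernel-verified Lean document; each statement's English description precedes it below -/
import Mathlib

section
/- Let φ and ψ be unit vectors in ℂ² that are linearly independent (representing distinct pure states) and nonorthogonal, i.e. ⟨ψ, φ⟩ ≠ 0. Let γ be a unit vector in ℂ² that is mutually unbiased to both φ and ψ, i.e. |⟨γ, φ⟩| = |⟨ψ, γ⟩| = 1/√2. Then the weak value of the projector onto γ, namely W_{φ,ψ}(|γ⟩⟨γ|) = ⟨ψ, γ⟩⟨γ, φ⟩ / ⟨ψ, φ⟩, has nonzero imaginary part. -/
/-!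
Complete `γ` to an orthonormal basis `(γ, γ')` of `ℂ²`. Then
`⟨ψ, φ⟩ = ⟨ψ, γ⟩⟨γ, φ⟩ + ⟨ψ, γ'⟩⟨γ', φ⟩`, and mutual unbiasedness gives both summands modulus
`1/2`. If the weak value `⟨ψ, γ⟩⟨γ, φ⟩ / ⟨ψ, φ⟩` were real, the two summands would be real
multiples of their sum of equal modulus, hence equal; then `|⟨ψ, φ⟩| = 1`, the equality case of
Cauchy–Schwarz, which contradicts the independence of `φ` and `ψ`.
-/

noncomputable section

/-- The rank-one projector `|v⟩⟨v|` with entries `v i * conj (v j)`. -/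
def proj (v : EuclideanSpace ℂ (Fin 2)) : Matrix (Fin 2) (Fin 2) ℂ :=
  Matrix.of fun i j => v i * star (v j)

/-- Matrix-vector multiplication, valued in `EuclideanSpace ℂ (Fin 2)`. -/
def mulVecE (M : Matrix (Fin 2) (Fin 2) ℂ) (v : EuclideanSpace ℂ (Fin 2)) :
    EuclideanSpace ℂ (Fin 2) :=
  (WithLp.equiv 2 (Fin 2 → ℂ)).symm (M.mulVec ((WithLp.equiv 2 (Fin 2 → ℂ)) v))

/-- The weak value `W_{φ,ψ}(M) = ⟨ψ, Mφ⟩ / ⟨ψ, φ⟩`. -/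
def weak (φ ψ : EuclideanSpace ℂ (Fin 2)) (M : Matrix (Fin 2) (Fin 2) ℂ) : ℂ :=
  (inner ℂ ψ (mulVecE M φ) : ℂ) / (inner ℂ ψ φ : ℂ)

open scoped InnerProductSpace
open Module

theorem Complex.eq_of_norm_eq_of_im_div_add_eq_zero {z w : ℂ} (hnorm : ‖z‖ = ‖w‖)
    (hzw : z + w ≠ 0) (him : (z / (z + w)).im = 0) : z = w := by
  set s := z + w
  set t : ℝ := (z / s).re
  have hz : z = t * s := by
    rw [← div_eq_iff hzw]
    exact Complex.ext (by simp [t]) (by simpa using him)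
  have hw : w = (1 - t : ℝ) * s := by
    push_cast
    linear_combination -hz
  have ht : |t| = |1 - t| := by
    rw [hz, hw, norm_mul, norm_mul, Complex.norm_real, Complex.norm_real] at hnorm
    exact mul_right_cancel₀ (norm_ne_zero_iff.mpr hzw) hnorm
  have ht' : t = 1 / 2 := by
    rcases abs_eq_abs.mp ht with h | h <;> linarith
  rw [hz, hw, ht']
  norm_num

theorem exists_orthonormalBasis_fin_two_apply_zero {𝕜 E : Type*} [RCLike 𝕜]
    [NormedAddCommGroup E] [InnerProductSpace 𝕜 E] (hE : finrank 𝕜 E = 2) {γ : E}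
    (hγ : ‖γ‖ = 1) : ∃ b : OrthonormalBasis (Fin 2) 𝕜 E, b 0 = γ := by
  have : FiniteDimensional 𝕜 E := .of_finrank_eq_succ hE
  have hv : Orthonormal 𝕜 (({0} : Set (Fin 2)).domRestrict fun _ ↦ γ) := by
    exact ⟨fun _ ↦ hγ, fun i j hij ↦ absurd (Subsingleton.elim i j) hij⟩
  obtain ⟨b, hb⟩ := hv.exists_orthonormalBasis_extension_of_card_eq (by simpa using hE)
  exact ⟨b, hb 0 rfl⟩

theorem norm_inner_ne_norm_mul_norm_of_linearIndependent {𝕜 E : Type*} [RCLike 𝕜]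
    [NormedAddCommGroup E] [InnerProductSpace 𝕜 E] {x y : E}
    (h : LinearIndependent 𝕜 ![x, y]) : ‖⟪y, x⟫_𝕜‖ ≠ ‖y‖ * ‖x‖ := by
  intro heq
  rcases ((norm_inner_eq_norm_tfae 𝕜 y x).out 0 2).mp heq with hy | ⟨r, hr⟩
  · exact h.ne_zero 1 (by simpa using hy)
  · exact (linearIndependent_fin2.mp h).2 r (by simpa using hr.symm)

lemma mulVecE_proj (γ φ : EuclideanSpace ℂ (Fin 2)) :
    mulVecE (proj γ) φ = ⟪γ, φ⟫_ℂ • γ := by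
  ext i
  simp only [mulVecE, proj, Matrix.mulVec, dotProduct, Matrix.of_apply, PiLp.smul_apply,
    PiLp.inner_apply, Fin.sum_univ_two, RCLike.inner_apply, smul_eq_mul, WithLp.equiv_symm_apply,
    WithLp.equiv_apply, starRingEnd_apply]
  ring

lemma weak_proj (φ ψ γ : EuclideanSpace ℂ (Fin 2)) :
    weak φ ψ (proj γ) = ⟪ψ, γ⟫_ℂ * ⟪γ, φ⟫_ℂ / ⟪ψ, φ⟫_ℂ := by
  rw [weak, mulVecE_proj, inner_smul_right, mul_comm]

theorem inner_eq_two_mul_of_im_div_eq_zero {E : Type*} [NormedAddCommGroup E]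
    [InnerProductSpace ℂ E] (hE : finrank ℂ E = 2) {φ ψ γ : E}
    (hφ : ‖φ‖ = 1) (hψ : ‖ψ‖ = 1) (hγ : ‖γ‖ = 1)
    (hunbiased : ‖⟪γ, φ⟫_ℂ‖ ^ 2 + ‖⟪ψ, γ⟫_ℂ‖ ^ 2 = 1) (hno : ⟪ψ, φ⟫_ℂ ≠ 0)
    (him : (⟪ψ, γ⟫_ℂ * ⟪γ, φ⟫_ℂ / ⟪ψ, φ⟫_ℂ).im = 0) :
    ⟪ψ, φ⟫_ℂ = 2 * (⟪ψ, γ⟫_ℂ * ⟪γ, φ⟫_ℂ) := by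
  obtain ⟨b, hb⟩ := exists_orthonormalBasis_fin_two_apply_zero hE hγ
  have hsplit : ⟪ψ, φ⟫_ℂ = ⟪ψ, γ⟫_ℂ * ⟪γ, φ⟫_ℂ + ⟪ψ, b 1⟫_ℂ * ⟪b 1, φ⟫_ℂ := by
    rw [← b.sum_inner_mul_inner, Fin.sum_univ_two, hb]
  have hφ' : ‖⟪γ, φ⟫_ℂ‖ ^ 2 + ‖⟪b 1, φ⟫_ℂ‖ ^ 2 = 1 := by
    rw [← hb, ← Fin.sum_univ_two (fun i ↦ ‖⟪b i, φ⟫_ℂ‖ ^ 2), b.sum_sq_norm_inner_right, hφ,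
      one_pow]
  have hψ' : ‖⟪ψ, γ⟫_ℂ‖ ^ 2 + ‖⟪ψ, b 1⟫_ℂ‖ ^ 2 = 1 := by
    rw [← hb, ← Fin.sum_univ_two (fun i ↦ ‖⟪ψ, b i⟫_ℂ‖ ^ 2), b.sum_sq_norm_inner_left, hψ,
      one_pow]
  have hnorm : ‖⟪ψ, γ⟫_ℂ * ⟪γ, φ⟫_ℂ‖ = ‖⟪ψ, b 1⟫_ℂ * ⟪b 1, φ⟫_ℂ‖ := by
    rw [← sq_eq_sq₀ (norm_nonneg _) (norm_nonneg _), norm_mul, norm_mul, mul_pow, mul_pow]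
    nlinarith
  rw [hsplit] at hno him ⊢
  rw [Complex.eq_of_norm_eq_of_im_div_add_eq_zero hnorm hno him]
  ring

/-- if `γ` is mutually unbiased to both the pre-selected state `φ` and the
post-selected state `ψ` (which are distinct and nonorthogonal), then the weak value of
`|γ⟩⟨γ|` has nonzero imaginary part. -/
theorem stmt0 (φ ψ γ : EuclideanSpace ℂ (Fin 2))
    (hφ : ‖φ‖ = 1) (hψ : ‖ψ‖ = 1) (hγ : ‖γ‖ = 1)
    (hind : LinearIndependent ℂ ![φ, ψ])
    (hno : (inner ℂ ψ φ : ℂ) ≠ 0)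
    (hmu1 : ‖(inner ℂ γ φ : ℂ)‖ = 1 / Real.sqrt 2)
    (hmu2 : ‖(inner ℂ ψ γ : ℂ)‖ = 1 / Real.sqrt 2) :
    (weak φ ψ (proj γ)).im ≠ 0 := by
  intro him
  have hhalf : (1 / √2 : ℝ) ^ 2 = 1 / 2 := by rw [div_pow, one_pow, Real.sq_sqrt zero_le_two]
  rw [weak_proj] at him
  have hdouble := inner_eq_two_mul_of_im_div_eq_zero finrank_euclideanSpace_fin hφ hψ hγ
    (by rw [hmu1, hmu2, hhalf]; norm_num) hno him
  apply norm_inner_ne_norm_mul_norm_of_linearIndependent hind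
  rw [hdouble, hφ, hψ, norm_mul, norm_mul, hmu1, hmu2]
  field_simp
  norm_num
end
end

section
/- Let φ and ψ be unit vectors in ℂ² with ⟨ψ, φ⟩ ≠ 0, and let I be the 2×2 identity matrix. For any real numbers a and b, the weak value W_{φ,ψ}(a(|φ⟩⟨φ| − I/2) + b(|ψ⟩⟨ψ| − I/2)) is a real number (its imaginary part is zero). In other words, every Hermitian operator in the real span of |φ⟩⟨φ| − I/2 and |ψ⟩⟨ψ| − I/2 (the PPS plane) has real weak value. -/
/-! Since `|v⟩⟨v| w = ⟨v, w⟩ v`, the weak value of `|φ⟩⟨φ|` is `‖φ‖² = 1` and that of `|ψ⟩⟨ψ|`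
is `‖ψ‖² = 1`, as is that of `I`. The weak value is linear in the operator, so the operator
`a(|φ⟩⟨φ| − I/2) + b(|ψ⟩⟨ψ| − I/2)` has weak value `(a + b)/2`. -/

noncomputable section

lemma mulVecE_eq_toLpLin (M : Matrix (Fin 2) (Fin 2) ℂ) (v : EuclideanSpace ℂ (Fin 2)) :
    mulVecE M v = Matrix.toLpLin 2 2 M v := rfl

lemma mulVecE_proj_s2 (v w : EuclideanSpace ℂ (Fin 2)) :
    mulVecE (proj v) w = inner ℂ v w • v := by
  ext i
  simp only [mulVecE, proj, WithLp.equiv_symm_apply, WithLp.equiv_apply, PiLp.toLp_apply,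
    Matrix.mulVec, dotProduct, Matrix.of_apply, PiLp.smul_apply, smul_eq_mul, PiLp.inner_apply,
    RCLike.inner_apply, RCLike.star_def, Finset.sum_mul]
  exact Finset.sum_congr rfl fun j _ => by ring

lemma weak_add (φ ψ : EuclideanSpace ℂ (Fin 2)) (M N : Matrix (Fin 2) (Fin 2) ℂ) :
    weak φ ψ (M + N) = weak φ ψ M + weak φ ψ N := by
  simp only [weak, mulVecE_eq_toLpLin, map_add, LinearMap.add_apply, inner_add_right, add_div]

lemma weak_sub (φ ψ : EuclideanSpace ℂ (Fin 2)) (M N : Matrix (Fin 2) (Fin 2) ℂ) :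
    weak φ ψ (M - N) = weak φ ψ M - weak φ ψ N := by
  simp only [weak, mulVecE_eq_toLpLin, map_sub, LinearMap.sub_apply, inner_sub_right, sub_div]

lemma weak_smul (φ ψ : EuclideanSpace ℂ (Fin 2)) (c : ℂ) (M : Matrix (Fin 2) (Fin 2) ℂ) :
    weak φ ψ (c • M) = c * weak φ ψ M := by
  simp only [weak, mulVecE_eq_toLpLin, map_smul, LinearMap.smul_apply, inner_smul_right,
    mul_div_assoc]

lemma weak_one {φ ψ : EuclideanSpace ℂ (Fin 2)} (h : inner ℂ ψ φ ≠ 0) : weak φ ψ 1 = 1 := by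
  simp [weak, mulVecE_eq_toLpLin, h]

lemma weak_proj_left {φ ψ : EuclideanSpace ℂ (Fin 2)} (h : inner ℂ ψ φ ≠ 0) :
    weak φ ψ (proj φ) = (‖φ‖ ^ 2 : ℝ) := by
  rw [weak, mulVecE_proj_s2, inner_smul_right, mul_div_cancel_right₀ _ h, inner_self_eq_norm_sq_to_K]
  push_cast; rfl

lemma weak_proj_right {φ ψ : EuclideanSpace ℂ (Fin 2)} (h : inner ℂ ψ φ ≠ 0) :
    weak φ ψ (proj ψ) = (‖ψ‖ ^ 2 : ℝ) := by
  rw [weak, mulVecE_proj_s2, inner_smul_right, inner_self_eq_norm_sq_to_K, mul_div_cancel_left₀ _ h]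
  push_cast; rfl

/-- every operator in the PPS plane, i.e. the real span of
`|φ⟩⟨φ| - I/2` and `|ψ⟩⟨ψ| - I/2`, has real weak value. -/
theorem stmt2 (φ ψ : EuclideanSpace ℂ (Fin 2))
    (hφ : ‖φ‖ = 1) (hψ : ‖ψ‖ = 1) (hno : (inner ℂ ψ φ : ℂ) ≠ 0) (a b : ℝ) :
    (weak φ ψ ((a : ℂ) • (proj φ - (1 / 2 : ℂ) • (1 : Matrix (Fin 2) (Fin 2) ℂ))
        + (b : ℂ) • (proj ψ - (1 / 2 : ℂ) • (1 : Matrix (Fin 2) (Fin 2) ℂ)))).im = 0 := by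
  have hW : weak φ ψ ((a : ℂ) • (proj φ - (1 / 2 : ℂ) • (1 : Matrix (Fin 2) (Fin 2) ℂ))
        + (b : ℂ) • (proj ψ - (1 / 2 : ℂ) • (1 : Matrix (Fin 2) (Fin 2) ℂ)))
      = ((a + b) / 2 : ℝ) := by
    simp only [weak_add, weak_sub, weak_smul, weak_one hno, weak_proj_left hno,
      weak_proj_right hno, hφ, hψ]
    push_cast; ring
  rw [hW, Complex.ofReal_im]
end
end

section
/- Let φ and ψ be unit vectors in ℂ² that are linearly independent and satisfy ⟨ψ, φ⟩ ≠ 0, and let M be a 2×2 Hermitian matrix with trace 0. Then the weak value W_{φ,ψ}(M) is real if and only if M lies in the real span of the two matrices |φ⟩⟨φ| − I/2 and |ψ⟩⟨ψ| − I/2, where I is the 2×2 identity matrix. -/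
noncomputable section

/-!
Write `c = ⟪ψ, φ⟫` and, in the basis `φ, ψ`, `Mφ = p φ + q ψ`. The weak value is `p + q / c` and
the expectation value `⟪φ, Mφ⟫ = p + |c|² (q / c)` is real because `M` is Hermitian; since
`|c| < 1` by strict Cauchy–Schwarz, both `p` and `q / c` are real. With `b = q / c` and
`a = 2p + b`, the combination `N = a (|φ⟩⟨φ| - I/2) + b (|ψ⟩⟨ψ| - I/2)` agrees with `M` on `φ`, so
`M - N` is a traceless Hermitian operator on `ℂ²` with a nonzero kernel vector, hence zero.
Conversely the weak value of such a combination is `(a + b) / 2`.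
-/

open scoped InnerProductSpace

theorem LinearMap.IsSymmetric.eq_zero_of_trace_eq_zero_of_apply_eq_zero
    {𝕜 E : Type*} [RCLike 𝕜] [NormedAddCommGroup E] [InnerProductSpace 𝕜 E]
    (hE : Module.finrank 𝕜 E = 2) {v w : E} (hvw : LinearIndependent 𝕜 ![v, w])
    {T : E →ₗ[𝕜] E} (hT : T.IsSymmetric) (htr : LinearMap.trace 𝕜 E T = 0) (hv : T v = 0) :
    T = 0 := by
  let b := basisOfLinearIndependentOfCardEqFinrank hvw (by simp [hE])
  have hb : ⇑b = ![v, w] := coe_basisOfLinearIndependentOfCardEqFinrank hvw _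
  have hb0 : b 0 = v := by simp [hb]
  have hb1 : b 1 = w := by simp [hb]
  obtain ⟨α, β, hTw⟩ : ∃ α β : 𝕜, T w = α • v + β • w :=
    ⟨b.repr (T w) 0, b.repr (T w) 1, by
      conv_lhs => rw [← b.sum_repr (T w)]
      rw [Fin.sum_univ_two, hb0, hb1]⟩
  have hβ : β = 0 := by
    rw [LinearMap.trace_eq_matrix_trace 𝕜 b, Matrix.trace_fin_two,
      LinearMap.toMatrix_apply, LinearMap.toMatrix_apply, hb0, hb1, hv, hTw] at htr
    simpa [← hb0, ← hb1] using htr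
  have hα : α = 0 := by
    have hv0 : v ≠ 0 := hvw.ne_zero 0
    have h := hT v w
    rw [hv, inner_zero_left, hTw, hβ, zero_smul, add_zero, inner_smul_right] at h
    simpa [hv0] using h.symm
  refine b.ext fun i => ?_
  fin_cases i
  · simpa [hb0] using hv
  · simpa [hb1, hα, hβ] using hTw

theorem norm_inner_lt_norm_mul_norm_of_linearIndependent
    {𝕜 E : Type*} [RCLike 𝕜] [NormedAddCommGroup E] [InnerProductSpace 𝕜 E] {x y : E}
    (h : LinearIndependent 𝕜 ![x, y]) : ‖⟪y, x⟫_𝕜‖ < ‖y‖ * ‖x‖ := by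
  refine (norm_inner_le_norm y x).lt_of_ne fun heq => ?_
  obtain ⟨r, -, hr⟩ := (norm_inner_eq_norm_iff (h.ne_zero 1) (h.ne_zero 0)).1 heq
  exact (linearIndependent_fin2.1 h).2 r (by simpa using hr.symm)

theorem Matrix.trace_toEuclideanLin {𝕜 n : Type*} [RCLike 𝕜] [Fintype n] [DecidableEq n]
    (A : Matrix n n 𝕜) : LinearMap.trace 𝕜 _ (Matrix.toEuclideanLin A) = A.trace :=
  Matrix.trace_toLin_eq A (PiLp.basisFun 2 𝕜 n)

theorem Complex.im_eq_zero_of_im_add_eq_zero_of_ne_one {z u : ℂ} {t : ℝ} (ht : t ≠ 1)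
    (h₁ : (z + u).im = 0) (h₂ : (z + t * u).im = 0) : z.im = 0 ∧ u.im = 0 := by
  simp only [add_im, im_ofReal_mul] at h₁ h₂
  have hu : u.im = 0 := by
    have : (t - 1) * u.im = 0 := by linarith
    simpa [sub_ne_zero.2 ht] using this
  exact ⟨by linarith, hu⟩

section

variable {φ ψ : EuclideanSpace ℂ (Fin 2)}

def centeredProj (v : EuclideanSpace ℂ (Fin 2)) : Matrix (Fin 2) (Fin 2) ℂ :=
  proj v - (1 / 2 : ℂ) • (1 : Matrix (Fin 2) (Fin 2) ℂ)

theorem mulVecE_eq_toEuclideanLin (M : Matrix (Fin 2) (Fin 2) ℂ) (v : EuclideanSpace ℂ (Fin 2)) :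
    mulVecE M v = Matrix.toEuclideanLin M v :=
  rfl

theorem mulVecE_centeredProj (v w : EuclideanSpace ℂ (Fin 2)) :
    mulVecE (centeredProj v) w = ⟪v, w⟫_ℂ • v - (1 / 2 : ℂ) • w := by
  ext i
  fin_cases i <;>
    simp [mulVecE, centeredProj, proj, PiLp.inner_apply, Fin.sum_univ_two] <;> ring

theorem isHermitian_centeredProj (v : EuclideanSpace ℂ (Fin 2)) :
    (centeredProj v).IsHermitian := by
  refine Matrix.IsHermitian.sub (Matrix.IsHermitian.ext fun i j => ?_) ?_
  · simp [proj, mul_comm]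
  · exact Matrix.isHermitian_one.smul (by simp [IsSelfAdjoint])

theorem trace_centeredProj {v : EuclideanSpace ℂ (Fin 2)} (hv : ‖v‖ = 1) :
    (centeredProj v).trace = 0 := by
  have h : (proj v).trace = ⟪v, v⟫_ℂ := by
    simp only [proj, Matrix.trace, Matrix.diag_apply, Matrix.of_apply, PiLp.inner_apply,
      RCLike.inner_apply, RCLike.star_def]
  rw [centeredProj, Matrix.trace_sub, h, inner_self_eq_norm_sq_to_K, hv]
  norm_num

theorem weak_of_mulVecE_eq (hno : ⟪ψ, φ⟫_ℂ ≠ 0) (hψ : ‖ψ‖ = 1) {M : Matrix (Fin 2) (Fin 2) ℂ}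
    {p q : ℂ} (hM : mulVecE M φ = p • φ + q • ψ) : weak φ ψ M = p + q / ⟪ψ, φ⟫_ℂ := by
  rw [weak, hM, inner_add_right, inner_smul_right, inner_smul_right,
    inner_self_eq_norm_sq_to_K, hψ]
  field_simp
  norm_num

theorem mulVecE_smul_centeredProj_add (hφ : ‖φ‖ = 1) (a b : ℂ) :
    mulVecE (a • centeredProj φ + b • centeredProj ψ) φ
      = ((a - b) / 2) • φ + (b * ⟪ψ, φ⟫_ℂ) • ψ := by
  rw [mulVecE_eq_toEuclideanLin, map_add, map_smul, map_smul, LinearMap.add_apply,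
    LinearMap.smul_apply, LinearMap.smul_apply, ← mulVecE_eq_toEuclideanLin,
    ← mulVecE_eq_toEuclideanLin, mulVecE_centeredProj, mulVecE_centeredProj,
    inner_self_eq_norm_sq_to_K, hφ]
  module

theorem weak_smul_centeredProj_add (hφ : ‖φ‖ = 1) (hψ : ‖ψ‖ = 1) (hno : ⟪ψ, φ⟫_ℂ ≠ 0)
    (a b : ℂ) : weak φ ψ (a • centeredProj φ + b • centeredProj ψ) = (a + b) / 2 := by
  rw [weak_of_mulVecE_eq hno hψ (mulVecE_smul_centeredProj_add hφ a b)]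
  field_simp
  ring

theorem isHermitian_smul_centeredProj_add (a b : ℝ) :
    ((a : ℂ) • centeredProj φ + (b : ℂ) • centeredProj ψ).IsHermitian :=
  ((isHermitian_centeredProj φ).smul (by simp [IsSelfAdjoint])).add
    ((isHermitian_centeredProj ψ).smul (by simp [IsSelfAdjoint]))

theorem trace_smul_centeredProj_add (hφ : ‖φ‖ = 1) (hψ : ‖ψ‖ = 1) (a b : ℂ) :
    (a • centeredProj φ + b • centeredProj ψ).trace = 0 := by
  simp [trace_centeredProj hφ, trace_centeredProj hψ]

theorem Matrix.IsHermitian.eq_of_trace_eq_of_mulVecE_eq (hind : LinearIndependent ℂ ![φ, ψ])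
    {M N : Matrix (Fin 2) (Fin 2) ℂ} (hM : M.IsHermitian) (hN : N.IsHermitian)
    (htr : M.trace = N.trace) (hφ : mulVecE M φ = mulVecE N φ) : M = N := by
  suffices Matrix.toEuclideanLin (M - N) = 0 from
    sub_eq_zero.1 (Matrix.toEuclideanLin.map_eq_zero_iff.1 this)
  refine LinearMap.IsSymmetric.eq_zero_of_trace_eq_zero_of_apply_eq_zero (by simp) hind
    (Matrix.isSymmetric_toEuclideanLin_iff.2 (hM.sub hN)) ?_ ?_
  · rw [Matrix.trace_toEuclideanLin, Matrix.trace_sub, htr, sub_self]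
  · rw [map_sub, LinearMap.sub_apply, ← mulVecE_eq_toEuclideanLin,
      ← mulVecE_eq_toEuclideanLin, hφ, sub_self]

theorem exists_mulVecE_eq_smul_centeredProj_add_of_im_weak_eq_zero (hφ : ‖φ‖ = 1)
    (hψ : ‖ψ‖ = 1) (hind : LinearIndependent ℂ ![φ, ψ]) (hno : ⟪ψ, φ⟫_ℂ ≠ 0)
    {M : Matrix (Fin 2) (Fin 2) ℂ} (hM : M.IsHermitian) (him : (weak φ ψ M).im = 0) :
    ∃ a b : ℝ,
      mulVecE M φ = mulVecE ((a : ℂ) • centeredProj φ + (b : ℂ) • centeredProj ψ) φ := by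
  have hspan := hind.span_eq_top_of_card_eq_finrank' (by simp)
  rw [Matrix.range_cons_cons_empty] at hspan
  obtain ⟨p, q, hMφ⟩ := Submodule.mem_span_pair.1 (hspan ▸ Submodule.mem_top : mulVecE M φ ∈ _)
  have hexp : ⟪φ, mulVecE M φ⟫_ℂ = p + (Complex.normSq ⟪ψ, φ⟫_ℂ : ℂ) * (q / ⟪ψ, φ⟫_ℂ) := by
    rw [← Complex.mul_conj, ← hMφ, inner_add_right, inner_smul_right, inner_smul_right,
      inner_self_eq_norm_sq_to_K, hφ, ← inner_conj_symm φ ψ]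
    field_simp
    norm_num
  have hc : Complex.normSq ⟪ψ, φ⟫_ℂ ≠ 1 := by
    have := norm_inner_lt_norm_mul_norm_of_linearIndependent hind
    rw [hφ, hψ, mul_one] at this
    rw [Complex.normSq_eq_norm_sq]
    nlinarith [norm_nonneg ⟪ψ, φ⟫_ℂ]
  obtain ⟨hp, hu⟩ := Complex.im_eq_zero_of_im_add_eq_zero_of_ne_one hc
    (weak_of_mulVecE_eq hno hψ hMφ.symm ▸ him)
    (hexp ▸ (Matrix.isSymmetric_toEuclideanLin_iff.2 hM).im_inner_self_apply φ)
  refine ⟨2 * p.re + (q / ⟪ψ, φ⟫_ℂ).re, (q / ⟪ψ, φ⟫_ℂ).re, ?_⟩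
  have hp' : (p.re : ℂ) = p := Complex.ext rfl (by simp [hp])
  have hu' : ((q / ⟪ψ, φ⟫_ℂ).re : ℂ) = q / ⟪ψ, φ⟫_ℂ := Complex.ext rfl (by simpa using hu.symm)
  rw [mulVecE_smul_centeredProj_add hφ, ← hMφ]
  push_cast
  rw [hp', hu', div_mul_cancel₀ q hno]
  congr 2
  ring

end

/-- for distinct nonorthogonal pre- and post-selected states and a
trace-0 Hermitian `M`, the weak value `W_{φ,ψ}(M)` is real iff `M` lies in the real
span of `|φ⟩⟨φ| - I/2` and `|ψ⟩⟨ψ| - I/2` (the PPS plane). -/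
theorem stmt3 (φ ψ : EuclideanSpace ℂ (Fin 2))
    (hφ : ‖φ‖ = 1) (hψ : ‖ψ‖ = 1)
    (hind : LinearIndependent ℂ ![φ, ψ])
    (hno : (inner ℂ ψ φ : ℂ) ≠ 0)
    (M : Matrix (Fin 2) (Fin 2) ℂ) (hM : M.IsHermitian) (htr : M.trace = 0) :
    (weak φ ψ M).im = 0 ↔
      ∃ a b : ℝ, M = (a : ℂ) • (proj φ - (1 / 2 : ℂ) • (1 : Matrix (Fin 2) (Fin 2) ℂ))
        + (b : ℂ) • (proj ψ - (1 / 2 : ℂ) • (1 : Matrix (Fin 2) (Fin 2) ℂ)) := by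
  rw [← centeredProj, ← centeredProj]
  constructor
  · intro him
    obtain ⟨a, b, hMφ⟩ :=
      exists_mulVecE_eq_smul_centeredProj_add_of_im_weak_eq_zero hφ hψ hind hno hM him
    exact ⟨a, b, hM.eq_of_trace_eq_of_mulVecE_eq hind (isHermitian_smul_centeredProj_add a b)
      (by rw [htr, trace_smul_centeredProj_add hφ hψ]) hMφ⟩
  · rintro ⟨a, b, rfl⟩
    rw [weak_smul_centeredProj_add hφ hψ hno]
    simp
end
end

section
/- For any two unit vectors φ and ψ in ℂ², there exists a unit vector γ in ℂ² that is mutually unbiased to both, i.e. |⟨γ, φ⟩|² = 1/2 and |⟨γ, ψ⟩|² = 1/2. -/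
/-!
Extend `φ` to an orthonormal basis `(φ, χ)` and put `c = ⟪φ, ψ⟫`, `d = ⟪χ, ψ⟫`, so that
`|c|² + |d|² = 1`. For `|w| = 1` the unit vector `γ = (φ + w̄ χ) / √2` has `⟪γ, φ⟫ = 1/√2` and
`⟪γ, ψ⟫ = (c + w d) / √2`; choosing the phase `w` so that `w d ⊥ c` in `ℂ ≅ ℝ²` gives
`|c + w d|² = |c|² + |d|² = 1` by Pythagoras.
-/

open Complex ComplexConjugate

namespace Complex

theorem exp_neg_arg_mul_I_mul_self (z : ℂ) : exp (-(arg z * I)) * z = ‖z‖ := by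
  have hexp : exp (-(arg z * I)) * exp (arg z * I) = 1 := by
    rw [← exp_add, neg_add_cancel, exp_zero]
  linear_combination (-exp (-(arg z * I))) * norm_mul_exp_arg_mul_I z + (‖z‖ : ℂ) * hexp

theorem exists_norm_eq_one_sq_norm_add_mul (c d : ℂ) :
    ∃ w : ℂ, ‖w‖ = 1 ∧ ‖c + w * d‖ ^ 2 = ‖c‖ ^ 2 + ‖d‖ ^ 2 := by
  set w := I * exp (-(arg (conj c * d) * I))
  have hw : ‖w‖ = 1 := by simp [w, norm_exp]
  have horth : inner ℝ c (w * d) = 0 := by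
    have : w * d * conj c = I * ‖conj c * d‖ := by
      rw [← exp_neg_arg_mul_I_mul_self (conj c * d)]
      ring
    simp [Complex.inner, this]
  refine ⟨w, hw, ?_⟩
  rw [norm_add_sq_real, horth, norm_mul, hw]
  ring

end Complex

section

variable {E : Type*} [NormedAddCommGroup E] [InnerProductSpace ℂ E]

theorem exists_orthonormalBasis_fin_two_zero (hE : Module.finrank ℂ E = 2) {φ : E}
    (hφ : ‖φ‖ = 1) : ∃ b : OrthonormalBasis (Fin 2) ℂ E, b 0 = φ := by
  have : FiniteDimensional ℂ E := Module.finite_of_finrank_eq_succ hE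
  obtain ⟨b, hb⟩ := Orthonormal.exists_orthonormalBasis_extension_of_card_eq (𝕜 := ℂ)
    (v := fun _ : Fin 2 => φ) (s := {0}) (by simpa using hE)
    (orthonormal_subsingleton_iff.2 fun _ => hφ)
  exact ⟨b, hb 0 rfl⟩

theorem exists_mutuallyUnbiased_of_orthonormalBasis (b : OrthonormalBasis (Fin 2) ℂ E) {ψ : E}
    (hψ : ‖ψ‖ = 1) :
    ∃ γ : E, ‖γ‖ = 1 ∧ ‖(inner ℂ γ (b 0) : ℂ)‖ ^ 2 = 1 / 2 ∧ ‖(inner ℂ γ ψ : ℂ)‖ ^ 2 = 1 / 2 := by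
  have hparseval : ‖(inner ℂ (b 0) ψ : ℂ)‖ ^ 2 + ‖(inner ℂ (b 1) ψ : ℂ)‖ ^ 2 = 1 := by
    simpa [Fin.sum_univ_two, hψ] using b.sum_sq_norm_inner_right ψ
  obtain ⟨w, hw, hcd⟩ := exists_norm_eq_one_sq_norm_add_mul (inner ℂ (b 0) ψ) (inner ℂ (b 1) ψ)
  set s : ℂ := ((√2 : ℝ) : ℂ)⁻¹
  have hs : ‖s‖ ^ 2 = 1 / 2 := by simp [s]
  set γ := s • (b 0 + conj w • b 1)
  have hγ (x : E) : inner ℂ γ x = s * (inner ℂ (b 0) x + w * inner ℂ (b 1) x) := by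
    simp only [γ, s, inner_smul_left, inner_add_left, conj_conj, map_inv₀, conj_ofReal]
  have hγb (i : Fin 2) : inner ℂ γ (b i) = s * ![1, w] i := by
    fin_cases i <;> simp [hγ, b.orthonormal.inner_eq_zero, b.orthonormal.1]
  refine ⟨γ, ?_, ?_, ?_⟩
  · rw [← pow_eq_one_iff_of_nonneg (norm_nonneg γ) two_ne_zero, ← b.sum_sq_norm_inner_left γ]
    simp [Fin.sum_univ_two, hγb, hs, hw]
    norm_num
  · simp [hγb, hs]
  · rw [hγ, norm_mul, mul_pow, hs, hcd, hparseval]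
    norm_num

theorem exists_mutuallyUnbiased_of_finrank_eq_two (hE : Module.finrank ℂ E = 2) {φ ψ : E}
    (hφ : ‖φ‖ = 1) (hψ : ‖ψ‖ = 1) :
    ∃ γ : E, ‖γ‖ = 1 ∧ ‖(inner ℂ γ φ : ℂ)‖ ^ 2 = 1 / 2 ∧ ‖(inner ℂ γ ψ : ℂ)‖ ^ 2 = 1 / 2 := by
  obtain ⟨b, rfl⟩ := exists_orthonormalBasis_fin_two_zero hE hφ
  exact exists_mutuallyUnbiased_of_orthonormalBasis b hψ

end

/-- for any two unit vectors `φ, ψ` in `ℂ²` there is a unit vector `γ`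
mutually unbiased to both: `|⟨γ,φ⟩|² = 1/2` and `|⟨γ,ψ⟩|² = 1/2`. -/
theorem stmt7 (φ ψ : EuclideanSpace ℂ (Fin 2)) (hφ : ‖φ‖ = 1) (hψ : ‖ψ‖ = 1) :
    ∃ γ : EuclideanSpace ℂ (Fin 2), ‖γ‖ = 1 ∧
      (‖(inner ℂ γ φ : ℂ)‖) ^ 2 = 1 / 2 ∧
      (‖(inner ℂ γ ψ : ℂ)‖) ^ 2 = 1 / 2 :=
  exists_mutuallyUnbiased_of_finrank_eq_two finrank_euclideanSpace_fin hφ hψ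
end

section
/- Let φ and ψ be unit vectors in ℂ² with ⟨ψ, φ⟩ ≠ 0. Then for every 2×2 complex matrix Q that is a rank-one orthogonal projection (Q Hermitian, Q² = Q, Tr(Q) = 1), the real part of the weak value satisfies |Re(W_{φ,ψ}(Q)) − 1/2| ≤ 1/(2|⟨φ, ψ⟩|). Equivalently, (1/2)(1 − 1/|⟨φ, ψ⟩|) ≤ Re(W_{φ,ψ}(Q)) ≤ (1/2)(1 + 1/|⟨φ, ψ⟩|). -/
/-! For an orthogonal projection `Q`, the reflection `2Q - 1` is unitary, and the weak value is
affine in the observable, so `W(Q) - 1/2 = W(2Q - 1)/2`. For a unitary `U` and unit vectors,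
Cauchy–Schwarz gives `|⟨ψ, Uφ⟩| ≤ 1`, hence `|W(U)| ≤ 1/|⟨ψ, φ⟩|`, and the real part of
`W(Q) - 1/2` is bounded by half of that. -/

noncomputable section

open Matrix

lemma mulVecE_eq_toEuclideanCLM (M : Matrix (Fin 2) (Fin 2) ℂ) (v : EuclideanSpace ℂ (Fin 2)) :
    mulVecE M v = toEuclideanCLM (𝕜 := ℂ) M v :=
  rfl

lemma weak_two_mul_sub_one {φ ψ : EuclideanSpace ℂ (Fin 2)} (h : (inner ℂ ψ φ : ℂ) ≠ 0)
    (M : Matrix (Fin 2) (Fin 2) ℂ) : weak φ ψ (2 * M - 1) = 2 * weak φ ψ M - 1 := by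
  simp only [weak, mulVecE_eq_toEuclideanCLM, two_mul, map_sub, map_add, map_one,
    _root_.sub_apply, _root_.add_apply, one_apply_eq_self, inner_sub_right, inner_add_right]
  field_simp

lemma norm_weak_le_of_mem_unitary {φ ψ : EuclideanSpace ℂ (Fin 2)} (hφ : ‖φ‖ = 1)
    (hψ : ‖ψ‖ = 1) {U : Matrix (Fin 2) (Fin 2) ℂ} (hU : U ∈ unitary _) :
    ‖weak φ ψ U‖ ≤ ‖(inner ℂ ψ φ : ℂ)‖⁻¹ := by
  have hUφ : ‖mulVecE U φ‖ = 1 := by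
    rw [mulVecE_eq_toEuclideanCLM, ContinuousLinearMap.norm_map_of_mem_unitary
      (Unitary.map_mem (toEuclideanCLM (𝕜 := ℂ)) hU), hφ]
  calc ‖weak φ ψ U‖ = ‖(inner ℂ ψ (mulVecE U φ) : ℂ)‖ * ‖(inner ℂ ψ φ : ℂ)‖⁻¹ := by
        rw [weak, norm_div, div_eq_mul_inv]
    _ ≤ 1 * ‖(inner ℂ ψ φ : ℂ)‖⁻¹ := by
        gcongr
        simpa [hψ, hUφ] using norm_inner_le_norm (𝕜 := ℂ) ψ (mulVecE U φ)
    _ = ‖(inner ℂ ψ φ : ℂ)‖⁻¹ := one_mul _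

theorem stmt9_general (φ ψ : EuclideanSpace ℂ (Fin 2))
    (hφ : ‖φ‖ = 1) (hψ : ‖ψ‖ = 1) (hno : (inner ℂ ψ φ : ℂ) ≠ 0)
    (Q : Matrix (Fin 2) (Fin 2) ℂ)
    (hQ : Q.IsHermitian) (hidem : Q * Q = Q) :
    |(weak φ ψ Q).re - 1 / 2| ≤ 1 / (2 * ‖(inner ℂ φ ψ : ℂ)‖) := by
  have hR : 2 * Q - 1 ∈ unitary _ := IsStarProjection.two_mul_sub_one_mem_unitary ⟨hidem, hQ⟩
  have hW : (weak φ ψ Q).re - 1 / 2 = (weak φ ψ (2 * Q - 1)).re / 2 := by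
    rw [weak_two_mul_sub_one hno]
    simp only [Complex.sub_re, Complex.mul_re, Complex.re_ofNat, Complex.im_ofNat, zero_mul,
      sub_zero, Complex.one_re]
    ring
  calc |(weak φ ψ Q).re - 1 / 2| = |(weak φ ψ (2 * Q - 1)).re| / 2 := by
        rw [hW, abs_div, abs_two]
    _ ≤ ‖(inner ℂ ψ φ : ℂ)‖⁻¹ / 2 := by
        gcongr
        exact (Complex.abs_re_le_norm _).trans (norm_weak_le_of_mem_unitary hφ hψ hR)
    _ = 1 / (2 * ‖(inner ℂ φ ψ : ℂ)‖) := by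
        rw [norm_inner_symm]
        field_simp

/-- for any rank-one orthogonal projection `Q`, the real part of the weak
value satisfies `|Re(W_{φ,ψ}(Q)) - 1/2| ≤ 1/(2|⟨φ,ψ⟩|)`. -/
theorem stmt9 (φ ψ : EuclideanSpace ℂ (Fin 2))
    (hφ : ‖φ‖ = 1) (hψ : ‖ψ‖ = 1) (hno : (inner ℂ ψ φ : ℂ) ≠ 0)
    (Q : Matrix (Fin 2) (Fin 2) ℂ)
    (hQ : Q.IsHermitian) (hidem : Q * Q = Q) (htr : Q.trace = 1) :
    |(weak φ ψ Q).re - 1 / 2| ≤ 1 / (2 * ‖(inner ℂ φ ψ : ℂ)‖) :=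
  stmt9_general φ ψ hφ hψ hno Q hQ hidem
end
end

section
/- Let γ and γ⊥ be orthonormal vectors in ℂ², let θ, α ∈ ℝ with ω := α − θ satisfying e^{iω} ≠ −1, and set φ = (γ + e^{iθ}γ⊥)/√2 and ψ = (γ + e^{iα}γ⊥)/√2. Then: (i) for every 2×2 complex matrix Q that is a rank-one orthogonal projection (Q Hermitian, Q² = Q, Tr(Q) = 1), |Im(W_{φ,ψ}(Q))| ≤ (1/2)|tan(ω/2)|; (ii) this bound is attained with Im(W_{φ,ψ}(|γ⟩⟨γ|)) = (1/2)tan(ω/2) and Im(W_{φ,ψ}(|γ⊥⟩⟨γ⊥|)) = −(1/2)tan(ω/2). -/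
noncomputable section

/-!
Write `a = ⟪γ, Qγ⟫`, `b = ⟪γ, Qγ⊥⟫` and `d = ⟪γ⊥, Qγ⊥⟫`. For self-adjoint `Q` the numbers `a`, `d`
are real and `⟪γ⊥, Qγ⟫ = conj b`. Multiplying numerator and denominator of the weak value by
`e^{iω/2}` turns the denominator into `2 cos (ω/2)` and the numerator into
`a e^{iω/2} + d e^{-iω/2} + 2 Re (e^{i(α+θ)/2} b)`, hence `Im W(Q) = (a - d)/2 · tan (ω/2)` for
every self-adjoint `Q`. For a rank-one projection `a, d ≥ 0` and `a + d = tr Q = 1`, so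
`|a - d| ≤ 1`, with `a - d = 1` at `|γ⟩⟨γ|` and `a - d = -1` at `|γ⊥⟩⟨γ⊥|`.
-/

open Complex ComplexConjugate InnerProductSpace

-- Where `cos ((α - θ) / 2) = 0` both sides are `0`, as `x / 0 = 0` and `Real.tan = sin / cos`.
lemma im_div_eq_half_sub_mul_tan (a d : ℝ) (b : ℂ) (θ α : ℝ) :
    ((a + exp (θ * I) * b + conj (exp (α * I)) * conj b + conj (exp (α * I)) * exp (θ * I) * d)
      / (1 + conj (exp (α * I)) * exp (θ * I))).im = (a - d) / 2 * Real.tan ((α - θ) / 2) := by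
  set s := (α - θ) / 2
  set z := exp (s * I)
  set e := exp (((α + θ) / 2 : ℝ) * I)
  have hz : conj z * z = 1 := by
    rw [conj_mul', norm_exp_ofReal_mul_I]; norm_num
  have he : conj e * e = 1 := by
    rw [conj_mul', norm_exp_ofReal_mul_I]; norm_num
  have hθ : exp (θ * I) = e * conj z := by
    rw [← exp_conj, ← exp_add, map_mul, conj_ofReal, conj_I]; congr 1; push_cast [s]; ring
  have hα : exp (α * I) = e * z := by
    rw [← exp_add]; congr 1; push_cast [s]; ring
  have hz0 : conj z ≠ 0 := (map_ne_zero _).mpr (exp_ne_zero _)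
  have hnum : (a + exp (θ * I) * b + conj (exp (α * I)) * conj b
      + conj (exp (α * I)) * exp (θ * I) * d)
      = conj z * (a * z + d * conj z + (e * b + conj (e * b))) := by
    rw [hθ, hα]; simp only [map_mul]
    linear_combination (-(a:ℂ)) * hz + (conj z * conj z * d) * he
  have hden : 1 + conj (exp (α * I)) * exp (θ * I) = conj z * ((2 * z.re : ℝ) : ℂ) := by
    rw [← add_conj, hθ, hα, map_mul]
    linear_combination (-1 : ℂ) * hz + (conj z * conj z) * he
  rw [hnum, hden, mul_div_mul_left _ _ hz0, div_ofReal_im, add_conj]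
  simp only [add_im, mul_im, ofReal_re, ofReal_im, conj_re, conj_im, z, exp_ofReal_mul_I_re,
    exp_ofReal_mul_I_im, Real.tan_eq_sin_div_cos]
  field_simp
  ring

section

variable {E : Type*} [NormedAddCommGroup E] [InnerProductSpace ℂ E]

theorem im_inner_div_inner_eq_half_sub_mul_tan {T : E →ₗ[ℂ] E} (hT : T.IsSymmetric)
    {γ γ' : E} (hγ : ‖γ‖ = 1) (hγ' : ‖γ'‖ = 1) (horth : ⟪γ, γ'⟫_ℂ = 0)
    (c : ℂ) (hc : c ≠ 0) (θ α : ℝ) :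
    (⟪c • (γ + exp (α * I) • γ'), T (c • (γ + exp (θ * I) • γ'))⟫_ℂ
      / ⟪c • (γ + exp (α * I) • γ'), c • (γ + exp (θ * I) • γ')⟫_ℂ).im
      = ((⟪γ, T γ⟫_ℂ).re - (⟪γ', T γ'⟫_ℂ).re) / 2 * Real.tan ((α - θ) / 2) := by
  have hcc : conj c * c ≠ 0 := by simp [hc]
  have hnum : ⟪c • (γ + exp (α * I) • γ'), T (c • (γ + exp (θ * I) • γ'))⟫_ℂ
      = conj c * c * ((⟪γ, T γ⟫_ℂ).re + exp (θ * I) * ⟪γ, T γ'⟫_ℂ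
        + conj (exp (α * I)) * conj ⟪γ, T γ'⟫_ℂ
        + conj (exp (α * I)) * exp (θ * I) * (⟪γ', T γ'⟫_ℂ).re) := by
    have hre (v : E) : ((⟪v, T v⟫_ℂ).re : ℂ) = ⟪v, T v⟫_ℂ := hT.coe_re_inner_self_apply v
    rw [hre, hre, inner_conj_symm, hT]
    simp only [map_add, map_smul, inner_add_left, inner_add_right, inner_smul_left,
      inner_smul_right]
    ring
  have hden : ⟪c • (γ + exp (α * I) • γ'), c • (γ + exp (θ * I) • γ')⟫_ℂ
      = conj c * c * (1 + conj (exp (α * I)) * exp (θ * I)) := by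
    simp only [inner_add_left, inner_add_right, inner_smul_left, inner_smul_right,
      inner_self_eq_one_of_norm_eq_one hγ, inner_self_eq_one_of_norm_eq_one hγ', horth,
      inner_eq_zero_symm.mp horth]
    ring
  rw [hnum, hden, mul_div_mul_left _ _ hcc, im_div_eq_half_sub_mul_tan]

end

section

variable {𝕜 E : Type*} [RCLike 𝕜] [NormedAddCommGroup E] [InnerProductSpace 𝕜 E]

theorem LinearMap.trace_eq_inner_add_inner_of_finrank_eq_two
    (hE : Module.finrank 𝕜 E = 2) {γ γ' : E} (h : Orthonormal 𝕜 ![γ, γ']) (T : E →ₗ[𝕜] E) :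
    T.trace 𝕜 E = ⟪γ, T γ⟫_𝕜 + ⟪γ', T γ'⟫_𝕜 := by
  let b := (basisOfOrthonormalOfCardEqFinrank h (by simp [hE])).toOrthonormalBasis
    (by rw [coe_basisOfOrthonormalOfCardEqFinrank]; exact h)
  rw [T.trace_eq_sum_inner b, Fin.sum_univ_two]
  simp [b]

theorem LinearMap.IsSymmetricProjection.abs_re_inner_sub_re_inner_le_one {T : E →ₗ[𝕜] E}
    (hT : T.IsSymmetricProjection) (hE : Module.finrank 𝕜 E = 2) {γ γ' : E}
    (h : Orthonormal 𝕜 ![γ, γ']) (htr : T.trace 𝕜 E = 1) :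
    |RCLike.re ⟪γ, T γ⟫_𝕜 - RCLike.re ⟪γ', T γ'⟫_𝕜| ≤ 1 := by
  have hsum : RCLike.re ⟪γ, T γ⟫_𝕜 + RCLike.re ⟪γ', T γ'⟫_𝕜 = 1 := by
    rw [← map_add, ← T.trace_eq_inner_add_inner_of_finrank_eq_two hE h, htr, RCLike.one_re]
  have hγ := hT.isPositive.re_inner_nonneg_right γ
  have hγ' := hT.isPositive.re_inner_nonneg_right γ'
  rw [abs_le]
  constructor <;> linarith

theorem Matrix.isSymmetricProjection_toEuclideanLin {n : Type*} [Fintype n] [DecidableEq n]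
    {Q : Matrix n n 𝕜} (hH : Q.IsHermitian) (hQ : Q * Q = Q) :
    (toEuclideanLin Q).IsSymmetricProjection where
  isSymmetric := isSymmetric_toEuclideanLin_iff.mpr hH
  isIdempotentElem := by rw [IsIdempotentElem, Module.End.mul_eq_comp, ← toLpLin_mul_same, hQ]

theorem Matrix.trace_toEuclideanLin_s10 {n : Type*} [Fintype n] [DecidableEq n] (Q : Matrix n n 𝕜) :
    (toEuclideanLin Q).trace 𝕜 _ = Q.trace := by
  rw [toEuclideanLin_eq_toLin_orthonormal, Matrix.trace_toLin_eq]

end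

theorem weak_eq_inner_div_inner (φ ψ : EuclideanSpace ℂ (Fin 2)) (M : Matrix (Fin 2) (Fin 2) ℂ) :
    weak φ ψ M = ⟪ψ, M.toEuclideanLin φ⟫_ℂ / ⟪ψ, φ⟫_ℂ := rfl

theorem toEuclideanLin_proj (v : EuclideanSpace ℂ (Fin 2)) :
    (proj v).toEuclideanLin = rankOne ℂ v v := by
  rw [← LinearEquiv.eq_symm_apply, symm_toEuclideanLin_rankOne]
  rfl

theorem stmt10_general (γ γperp : EuclideanSpace ℂ (Fin 2))
    (hγ : ‖γ‖ = 1) (hγp : ‖γperp‖ = 1) (horth : (inner ℂ γ γperp : ℂ) = 0)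
    (θ α : ℝ) (ω : ℝ) (hω : ω = α - θ)
    (φ ψ : EuclideanSpace ℂ (Fin 2))
    (hφ : φ = (Real.sqrt 2 : ℂ)⁻¹ • (γ + Complex.exp (θ * Complex.I) • γperp))
    (hψ : ψ = (Real.sqrt 2 : ℂ)⁻¹ • (γ + Complex.exp (α * Complex.I) • γperp)) :
    (∀ Q : Matrix (Fin 2) (Fin 2) ℂ, Q.IsHermitian → Q * Q = Q → Q.trace = 1 →
        |(weak φ ψ Q).im| ≤ (1 / 2) * |Real.tan (ω / 2)|) ∧
      (weak φ ψ (proj γ)).im = (1 / 2) * Real.tan (ω / 2) ∧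
      (weak φ ψ (proj γperp)).im = -((1 / 2) * Real.tan (ω / 2)) := by
  have hW (M : Matrix (Fin 2) (Fin 2) ℂ) (hM : M.toEuclideanLin.IsSymmetric) :
      (weak φ ψ M).im = ((⟪γ, M.toEuclideanLin γ⟫_ℂ).re
        - (⟪γperp, M.toEuclideanLin γperp⟫_ℂ).re) / 2 * Real.tan (ω / 2) := by
    rw [weak_eq_inner_div_inner, hφ, hψ, hω]
    exact im_inner_div_inner_eq_half_sub_mul_tan hM hγ hγp horth _ (by simp) θ α
  have hON : Orthonormal ℂ ![γ, γperp] := by simp [hγ, hγp, horth]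
  refine ⟨fun Q hH hQ htr => ?_, ?_, ?_⟩
  · have hle := (Matrix.isSymmetricProjection_toEuclideanLin hH hQ).abs_re_inner_sub_re_inner_le_one
      finrank_euclideanSpace_fin hON (by rw [Matrix.trace_toEuclideanLin_s10, htr])
    rw [hW Q (Matrix.isSymmetric_toEuclideanLin_iff.mpr hH), abs_mul, abs_div, abs_two]
    gcongr
    exact hle
  · rw [hW _ (toEuclideanLin_proj γ ▸ isSymmetric_rankOne_self γ), toEuclideanLin_proj]
    simp only [ContinuousLinearMap.coe_coe, rankOne_apply, inner_smul_right,
      inner_self_eq_one_of_norm_eq_one hγ, horth, inner_eq_zero_symm.mp horth]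
    norm_num
  · rw [hW _ (toEuclideanLin_proj γperp ▸ isSymmetric_rankOne_self γperp), toEuclideanLin_proj]
    simp only [ContinuousLinearMap.coe_coe, rankOne_apply, inner_smul_right,
      inner_self_eq_one_of_norm_eq_one hγp, horth, inner_eq_zero_symm.mp horth]
    norm_num

/-- the imaginary part of the weak value of any rank-one projection is
bounded by `(1/2)|tan(ω/2)|`, and the bound is attained at `|γ⟩⟨γ|` and `|γ⊥⟩⟨γ⊥|`. -/
theorem stmt10 (γ γperp : EuclideanSpace ℂ (Fin 2))
    (hγ : ‖γ‖ = 1) (hγp : ‖γperp‖ = 1) (horth : (inner ℂ γ γperp : ℂ) = 0)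
    (θ α : ℝ) (ω : ℝ) (hω : ω = α - θ)
    (hnon : Complex.exp (ω * Complex.I) ≠ -1)
    (φ ψ : EuclideanSpace ℂ (Fin 2))
    (hφ : φ = (Real.sqrt 2 : ℂ)⁻¹ • (γ + Complex.exp (θ * Complex.I) • γperp))
    (hψ : ψ = (Real.sqrt 2 : ℂ)⁻¹ • (γ + Complex.exp (α * Complex.I) • γperp)) :
    (∀ Q : Matrix (Fin 2) (Fin 2) ℂ, Q.IsHermitian → Q * Q = Q → Q.trace = 1 →
        |(weak φ ψ Q).im| ≤ (1 / 2) * |Real.tan (ω / 2)|) ∧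
      (weak φ ψ (proj γ)).im = (1 / 2) * Real.tan (ω / 2) ∧
      (weak φ ψ (proj γperp)).im = -((1 / 2) * Real.tan (ω / 2)) :=
  stmt10_general γ γperp hγ hγp horth θ α ω hω φ ψ hφ hψ
end
end

section
/- Let φ, φ⊥ be orthonormal vectors in ℂ², let ψ be a unit vector mutually unbiased to φ, i.e. |⟨ψ, φ⟩|² = 1/2, let p ∈ [0,1], and set ρ := (1−p)|φ⟩⟨φ| + p|φ⊥⟩⟨φ⊥|. For ε ∈ {+1, −1}, set s = ε√2 (so s = ε/|⟨φ, ψ⟩|) and H^ε := ((1−s)/2)·I + (s/2)·(|φ⟩⟨φ| + |ψ⟩⟨ψ|), where I is the 2×2 identity matrix. Then the generalized weak value satisfies W_{ρ,ψ}(H^ε) = Tr(|ψ⟩⟨ψ| H^ε ρ)/Tr(|ψ⟩⟨ψ|ρ) = (1/2)(1 + ε(1−p)√2). In particular W_{φ⊥,ψ}(H^ε) = 1/2. -/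
noncomputable section

/-- The generalized weak value `W_{ρ,ψ}(M) = Tr(|ψ⟩⟨ψ| M ρ) / Tr(|ψ⟩⟨ψ| ρ)`. -/
def gweak (ρ : Matrix (Fin 2) (Fin 2) ℂ) (ψ : EuclideanSpace ℂ (Fin 2))
    (M : Matrix (Fin 2) (Fin 2) ℂ) : ℂ :=
  (proj ψ * M * ρ).trace / (proj ψ * ρ).trace

/-! Since `φ, φ⊥` is an orthonormal basis of `ℂ²`, Parseval gives
`|⟨ψ, φ⊥⟩|² = 1 - |⟨ψ, φ⟩|² = 1/2`, so `Tr(|ψ⟩⟨ψ| ρ) = 1/2` for every `p`. The generalized weak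
value is linear in the observable, equals `1` on `I` and on `|ψ⟩⟨ψ|`, and equals `1 - p` on
`|φ⟩⟨φ|` because `|φ⟩⟨φ| ρ = (1 - p) |φ⟩⟨φ|`; hence `W_{ρ,ψ}(H) = (1 - s)/2 + (s/2)(2 - p)`.
The pure weak value `W_{φ⊥,ψ}` is the generalized one at `ρ = |φ⊥⟩⟨φ⊥|`, i.e. at `p = 1`. -/

open scoped InnerProductSpace

theorem norm_inner_sq_add_norm_inner_sq_of_finrank_eq_two {𝕜 E : Type*} [RCLike 𝕜]
    [NormedAddCommGroup E] [InnerProductSpace 𝕜 E] (hE : Module.finrank 𝕜 E = 2) {u v : E}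
    (hu : ‖u‖ = 1) (hv : ‖v‖ = 1) (huv : ⟪u, v⟫_𝕜 = 0) (x : E) :
    ‖⟪x, u⟫_𝕜‖ ^ 2 + ‖⟪x, v⟫_𝕜‖ ^ 2 = ‖x‖ ^ 2 := by
  have : FiniteDimensional 𝕜 E := .of_finrank_pos (by omega)
  have hon : Orthonormal 𝕜 ![u, v] := by simp [hu, hv, huv]
  let b := OrthonormalBasis.mk hon
    (hon.linearIndependent.span_eq_top_of_card_eq_finrank' (by simp [hE])).ge
  simpa [b, Fin.sum_univ_two] using b.sum_sq_norm_inner_left x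

lemma inner_eq_fin_two (u v : EuclideanSpace ℂ (Fin 2)) :
    ⟪u, v⟫_ℂ = star (u 0) * v 0 + star (u 1) * v 1 := by
  simp [EuclideanSpace.inner_eq_star_dotProduct, dotProduct, Fin.sum_univ_two, mul_comm]

lemma proj_mul_proj_apply (u v : EuclideanSpace ℂ (Fin 2)) (i j : Fin 2) :
    (proj u * proj v) i j = ⟪u, v⟫_ℂ * (u i * star (v j)) := by
  simp only [proj, Matrix.mul_apply, Matrix.of_apply, Fin.sum_univ_two, inner_eq_fin_two]
  ring

lemma proj_mul_self {u : EuclideanSpace ℂ (Fin 2)} (hu : ‖u‖ = 1) : proj u * proj u = proj u := by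
  ext i j
  rw [proj_mul_proj_apply, inner_self_eq_norm_sq_to_K, hu]
  simp [proj]

lemma proj_mul_proj_of_inner_eq_zero {u v : EuclideanSpace ℂ (Fin 2)} (h : ⟪u, v⟫_ℂ = 0) :
    proj u * proj v = 0 := by
  ext i j
  rw [proj_mul_proj_apply, h, zero_mul, Matrix.zero_apply]

lemma mulVecE_one (v : EuclideanSpace ℂ (Fin 2)) : mulVecE 1 v = v := by
  simp [mulVecE]

lemma trace_proj_mul_mul_proj (u v : EuclideanSpace ℂ (Fin 2)) (M : Matrix (Fin 2) (Fin 2) ℂ) :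
    (proj u * M * proj v).trace = ⟪u, mulVecE M v⟫_ℂ * ⟪v, u⟫_ℂ := by
  simp only [inner_eq_fin_two, proj, mulVecE, Matrix.trace, Matrix.diag, Matrix.mul_apply,
    Matrix.of_apply, Fin.sum_univ_two, RCLike.star_def, WithLp.equiv_apply,
    WithLp.equiv_symm_apply, Matrix.mulVec_fin_two, Matrix.cons_val_zero, Matrix.cons_val_one]
  ring

lemma trace_proj_mul_proj (u v : EuclideanSpace ℂ (Fin 2)) :
    (proj u * proj v).trace = ((‖⟪u, v⟫_ℂ‖ ^ 2 : ℝ) : ℂ) := by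
  have h := trace_proj_mul_mul_proj u v 1
  rw [Matrix.mul_one] at h
  rw [h, mulVecE_one, ← inner_conj_symm v u, RCLike.mul_conj]
  norm_cast

lemma proj_mul_smul_proj_add_smul_proj {φ χ : EuclideanSpace ℂ (Fin 2)} (hφ : ‖φ‖ = 1)
    (horth : ⟪φ, χ⟫_ℂ = 0) (a b : ℂ) : proj φ * (a • proj φ + b • proj χ) = a • proj φ := by
  rw [Matrix.mul_add, Matrix.mul_smul, Matrix.mul_smul, proj_mul_self hφ,
    proj_mul_proj_of_inner_eq_zero horth, smul_zero, add_zero]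

lemma trace_proj_mul_smul_proj_add_smul_proj (ψ φ χ : EuclideanSpace ℂ (Fin 2)) (a b : ℂ) :
    (proj ψ * (a • proj φ + b • proj χ)).trace
      = a * ((‖⟪ψ, φ⟫_ℂ‖ ^ 2 : ℝ) : ℂ) + b * ((‖⟪ψ, χ⟫_ℂ‖ ^ 2 : ℝ) : ℂ) := by
  rw [Matrix.mul_add, Matrix.mul_smul, Matrix.mul_smul, Matrix.trace_add, Matrix.trace_smul,
    Matrix.trace_smul, trace_proj_mul_proj, trace_proj_mul_proj, smul_eq_mul, smul_eq_mul]

section WeakValue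

variable {ρ : Matrix (Fin 2) (Fin 2) ℂ} {ψ : EuclideanSpace ℂ (Fin 2)}

lemma gweak_add (M N : Matrix (Fin 2) (Fin 2) ℂ) :
    gweak ρ ψ (M + N) = gweak ρ ψ M + gweak ρ ψ N := by
  simp only [gweak, Matrix.mul_add, Matrix.add_mul, Matrix.trace_add, add_div]

lemma gweak_smul (c : ℂ) (M : Matrix (Fin 2) (Fin 2) ℂ) :
    gweak ρ ψ (c • M) = c * gweak ρ ψ M := by
  simp only [gweak, Matrix.mul_smul, Matrix.smul_mul, Matrix.trace_smul, smul_eq_mul,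
    mul_div_assoc]

lemma gweak_one (h : (proj ψ * ρ).trace ≠ 0) : gweak ρ ψ 1 = 1 := by
  rw [gweak, Matrix.mul_one, div_self h]

lemma gweak_proj_self (hψ : ‖ψ‖ = 1) (h : (proj ψ * ρ).trace ≠ 0) :
    gweak ρ ψ (proj ψ) = 1 := by
  rw [gweak, proj_mul_self hψ, div_self h]

end WeakValue

lemma weak_eq_gweak_proj {φ ψ : EuclideanSpace ℂ (Fin 2)} (h : ⟪ψ, φ⟫_ℂ ≠ 0)
    (M : Matrix (Fin 2) (Fin 2) ℂ) : weak φ ψ M = gweak (proj φ) ψ M := by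
  have hden := trace_proj_mul_mul_proj ψ φ 1
  rw [Matrix.mul_one, mulVecE_one] at hden
  rw [weak, gweak, trace_proj_mul_mul_proj, hden,
    mul_div_mul_right _ _ (mt inner_eq_zero_symm.mpr h)]

theorem gweak_depolarized_eq {φ φperp ψ : EuclideanSpace ℂ (Fin 2)} (hφ : ‖φ‖ = 1)
    (horth : ⟪φ, φperp⟫_ℂ = 0) (hψ : ‖ψ‖ = 1) (hmu : ‖⟪ψ, φ⟫_ℂ‖ ^ 2 = 1 / 2)
    (hmuperp : ‖⟪ψ, φperp⟫_ℂ‖ ^ 2 = 1 / 2) (p s : ℝ) :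
    gweak (((1 - p : ℝ) : ℂ) • proj φ + ((p : ℝ) : ℂ) • proj φperp) ψ
      ((((1 - s) / 2 : ℝ) : ℂ) • 1 + ((s / 2 : ℝ) : ℂ) • (proj φ + proj ψ))
      = (1 + s * (1 - p)) / 2 := by
  set ρ := ((1 - p : ℝ) : ℂ) • proj φ + ((p : ℝ) : ℂ) • proj φperp
  have htr : (proj ψ * ρ).trace = 1 / 2 := by
    rw [trace_proj_mul_smul_proj_add_smul_proj, hmu, hmuperp]
    push_cast
    ring
  have htr0 : (proj ψ * ρ).trace ≠ 0 := by norm_num [htr]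
  have hproj : gweak ρ ψ (proj φ) = 1 - p := by
    rw [gweak, Matrix.mul_assoc, proj_mul_smul_proj_add_smul_proj hφ horth, Matrix.mul_smul,
      Matrix.trace_smul, trace_proj_mul_proj, hmu, htr]
    push_cast
    ring
  rw [gweak_add, gweak_smul, gweak_smul, gweak_add, gweak_one htr0,
    gweak_proj_self hψ htr0, hproj]
  push_cast
  ring

theorem stmt13_general (φ φperp ψ : EuclideanSpace ℂ (Fin 2))
    (hφ : ‖φ‖ = 1) (hφp : ‖φperp‖ = 1) (horth : (inner ℂ φ φperp : ℂ) = 0)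
    (hψ : ‖ψ‖ = 1)
    (hmu : (‖(inner ℂ ψ φ : ℂ)‖) ^ 2 = 1 / 2)
    (p : ℝ)
    (ρ : Matrix (Fin 2) (Fin 2) ℂ)
    (hρ : ρ = ((1 - p : ℝ) : ℂ) • proj φ + ((p : ℝ) : ℂ) • proj φperp)
    (ε : ℝ)
    (s : ℝ) (hs : s = ε * Real.sqrt 2)
    (H : Matrix (Fin 2) (Fin 2) ℂ)
    (hH : H = (((1 - s) / 2 : ℝ) : ℂ) • (1 : Matrix (Fin 2) (Fin 2) ℂ)
        + ((s / 2 : ℝ) : ℂ) • (proj φ + proj ψ)) :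
    gweak ρ ψ H = (1 / 2) * (1 + ((ε * (1 - p) * Real.sqrt 2 : ℝ) : ℂ)) ∧
      weak φperp ψ H = 1 / 2 := by
  have hmuperp : ‖⟪ψ, φperp⟫_ℂ‖ ^ 2 = 1 / 2 := by
    have := norm_inner_sq_add_norm_inner_sq_of_finrank_eq_two (by simp) hφ hφp horth ψ
    rw [hψ, hmu] at this
    linarith
  have hne : ⟪ψ, φperp⟫_ℂ ≠ 0 := by
    intro h
    norm_num [h] at hmuperp
  subst hρ hH hs
  refine ⟨?_, ?_⟩
  · rw [gweak_depolarized_eq hφ horth hψ hmu hmuperp]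
    push_cast
    ring
  · have hρ1 : ((1 - 1 : ℝ) : ℂ) • proj φ + ((1 : ℝ) : ℂ) • proj φperp = proj φperp := by simp
    rw [weak_eq_gweak_proj hne, ← hρ1, gweak_depolarized_eq hφ horth hψ hmu hmuperp]
    norm_num

/-- for mutually unbiased `φ, ψ` and depolarized pre-selection `ρ`, the
generalized weak value of `H^ε` (with `s = ε√2`) is `(1/2)(1 + ε(1-p)√2)`; in particular
`W_{φ⊥,ψ}(H^ε) = 1/2`. -/
theorem stmt13 (φ φperp ψ : EuclideanSpace ℂ (Fin 2))
    (hφ : ‖φ‖ = 1) (hφp : ‖φperp‖ = 1) (horth : (inner ℂ φ φperp : ℂ) = 0)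
    (hψ : ‖ψ‖ = 1)
    (hmu : (‖(inner ℂ ψ φ : ℂ)‖) ^ 2 = 1 / 2)
    (p : ℝ) (hp : p ∈ Set.Icc (0 : ℝ) 1)
    (ρ : Matrix (Fin 2) (Fin 2) ℂ)
    (hρ : ρ = ((1 - p : ℝ) : ℂ) • proj φ + ((p : ℝ) : ℂ) • proj φperp)
    (ε : ℝ) (hε : ε = 1 ∨ ε = -1)
    (s : ℝ) (hs : s = ε * Real.sqrt 2)
    (H : Matrix (Fin 2) (Fin 2) ℂ)
    (hH : H = (((1 - s) / 2 : ℝ) : ℂ) • (1 : Matrix (Fin 2) (Fin 2) ℂ)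
        + ((s / 2 : ℝ) : ℂ) • (proj φ + proj ψ)) :
    gweak ρ ψ H = (1 / 2) * (1 + ((ε * (1 - p) * Real.sqrt 2 : ℝ) : ℂ)) ∧
      weak φperp ψ H = 1 / 2 :=
  stmt13_general φ φperp ψ hφ hφp horth hψ hmu p ρ hρ ε s hs H hH
end
end

section
/- Let γ and γ⊥ be orthonormal vectors in ℂ², let θ ∈ ℝ, and set φ = (γ + e^{iθ}γ⊥)/√2 and ψ = (γ + e^{i(θ+π/2)}γ⊥)/√2 (mutually unbiased pre- and post-selection). Let φ⊥ be a unit vector orthogonal to φ, let p ∈ [0,1), and set ρ := (1−p)|φ⟩⟨φ| + p|φ⊥⟩⟨φ⊥|. Let H^+ := ((1−√2)/2)·I + (√2/2)·(|φ⟩⟨φ| + |ψ⟩⟨ψ|). Then |Re(W_{ρ,ψ}(H^+))| > |Im(W_{ρ,ψ}(|γ⟩⟨γ|))|. -/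
/-!
As `φ, φperp` is an orthonormal basis of `ℂ²`, `|φ⟩⟨φ| + |φperp⟩⟨φperp| = 1`, so
`ρ = p • 1 + (1 - 2p) • |φ⟩⟨φ|`. Every trace in the two weak values then reduces to inner products
among `γ, φ, ψ`; since `|⟨ψ, φ⟩|² = 1/2` (mutual unbiasedness), the denominator `Tr(|ψ⟩⟨ψ| ρ)` is
`1/2` for every `p`. This gives `W(H⁺) = (1 + √2 (1 - p)) / 2` and
`W(|γ⟩⟨γ|) = (1 + (1 - 2p) i) / 2`, and `|1 - 2p| < 1 + √2 (1 - p)` for `p ∈ [0, 1)`.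
-/

noncomputable section

open Matrix InnerProductSpace Complex
open scoped InnerProductSpace ComplexConjugate

section RankOne

variable {𝕜 ι n : Type*} [RCLike 𝕜] [Fintype n]

lemma vecMulVec_star_mul_vecMulVec_star (a b c d : EuclideanSpace 𝕜 n) :
    vecMulVec a (star b) * vecMulVec c (star d) = ⟪b, c⟫_𝕜 • vecMulVec a (star d) := by
  rw [vecMulVec_mul_vecMulVec, EuclideanSpace.inner_eq_star_dotProduct, dotProduct_comm]
  ext i j
  simp [vecMulVec_apply, mul_left_comm]

lemma trace_vecMulVec_star (a b : EuclideanSpace 𝕜 n) :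
    trace (vecMulVec a (star b)) = ⟪b, a⟫_𝕜 := by
  rw [trace_vecMulVec, EuclideanSpace.inner_eq_star_dotProduct]

lemma OrthonormalBasis.sum_vecMulVec_star_eq_one [Fintype ι] [DecidableEq n]
    (b : OrthonormalBasis ι 𝕜 (EuclideanSpace 𝕜 n)) :
    ∑ i, vecMulVec (b i) (star (b i)) = 1 := by
  have := congrArg (fun T : EuclideanSpace 𝕜 n →L[𝕜] EuclideanSpace 𝕜 n =>
    toEuclideanLin.symm T.toLinearMap) b.sum_rankOne_eq_id
  simpa [ContinuousLinearMap.toLinearMap_sum, map_sum, symm_toEuclideanLin_rankOne] using this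

lemma Orthonormal.sum_vecMulVec_star_eq_one [Fintype ι] [Nonempty ι] [DecidableEq n]
    {v : ι → EuclideanSpace 𝕜 n} (hv : Orthonormal 𝕜 v) (hcard : Fintype.card ι = Fintype.card n) :
    ∑ i, vecMulVec (v i) (star (v i)) = 1 := by
  let b := (basisOfOrthonormalOfCardEqFinrank hv (by simpa using hcard)).toOrthonormalBasis
    (by simpa using hv)
  simpa [b] using b.sum_vecMulVec_star_eq_one

end RankOne

lemma proj_eq_vecMulVec (v : EuclideanSpace ℂ (Fin 2)) : proj v = vecMulVec v (star v) := rfl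

lemma proj_add_proj_eq_one {u v : EuclideanSpace ℂ (Fin 2)} (hu : ‖u‖ = 1) (hv : ‖v‖ = 1)
    (huv : ⟪u, v⟫_ℂ = 0) : proj u + proj v = 1 := by
  have hon : Orthonormal ℂ ![u, v] := by
    rw [orthonormal_iff_ite]
    intro i j
    fin_cases i <;> fin_cases j <;> simp [hu, hv, huv, inner_eq_zero_symm.mp huv]
  simpa [Fin.sum_univ_two, proj_eq_vecMulVec] using hon.sum_vecMulVec_star_eq_one (by simp)

def depolarized (φ : EuclideanSpace ℂ (Fin 2)) (p : ℂ) : Matrix (Fin 2) (Fin 2) ℂ :=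
  p • 1 + (1 - 2 * p) • proj φ

lemma one_sub_smul_proj_add_smul_proj {φ φ' : EuclideanSpace ℂ (Fin 2)} (hφ : ‖φ‖ = 1)
    (hφ' : ‖φ'‖ = 1) (horth : ⟪φ, φ'⟫_ℂ = 0) (p : ℂ) :
    (1 - p) • proj φ + p • proj φ' = depolarized φ p := by
  rw [depolarized, ← proj_add_proj_eq_one hφ hφ' horth]
  module

section WeakValues

variable {φ ψ : EuclideanSpace ℂ (Fin 2)}

lemma trace_proj_mul_depolarized (hψ : ⟪ψ, ψ⟫_ℂ = 1) (hunb : ⟪ψ, φ⟫_ℂ * ⟪φ, ψ⟫_ℂ = 1 / 2)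
    (p : ℂ) : (proj ψ * depolarized φ p).trace = 1 / 2 := by
  simp only [depolarized, proj_eq_vecMulVec, Matrix.mul_add, Matrix.mul_smul, Matrix.mul_one,
    vecMulVec_star_mul_vecMulVec_star, trace_add, trace_smul, trace_vecMulVec_star, smul_eq_mul]
  linear_combination (1 - 2 * p) * hunb + p * hψ

lemma gweak_depolarized_smul_one_add_smul (hφ : ⟪φ, φ⟫_ℂ = 1) (hψ : ⟪ψ, ψ⟫_ℂ = 1)
    (hunb : ⟪ψ, φ⟫_ℂ * ⟪φ, ψ⟫_ℂ = 1 / 2) (p a b : ℂ) :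
    gweak (depolarized φ p) ψ (a • 1 + b • (proj φ + proj ψ)) = a + b * (2 - p) := by
  rw [gweak, trace_proj_mul_depolarized hψ hunb]
  simp only [depolarized, proj_eq_vecMulVec, Matrix.mul_add, Matrix.add_mul, Matrix.mul_smul,
    Matrix.smul_mul, Matrix.mul_one, vecMulVec_star_mul_vecMulVec_star, smul_smul,
    trace_add, trace_smul, trace_vecMulVec_star, smul_eq_mul, hφ, hψ]
  linear_combination (4 * b - 6 * p * b + 2 * a * (1 - 2 * p)) * hunb

lemma gweak_depolarized_proj {γ : EuclideanSpace ℂ (Fin 2)} (hψ : ⟪ψ, ψ⟫_ℂ = 1)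
    (hψφ : ⟪ψ, φ⟫_ℂ = (1 - I) / 2) (hφψ : ⟪φ, ψ⟫_ℂ = (1 + I) / 2)
    (hγψ : ⟪ψ, γ⟫_ℂ * ⟪γ, ψ⟫_ℂ = 1 / 2) (hγφ : ⟪ψ, γ⟫_ℂ * ⟪γ, φ⟫_ℂ = 1 / 2) (p : ℂ) :
    gweak (depolarized φ p) ψ (proj γ) = (1 + (1 - 2 * p) * I) / 2 := by
  have hunb : ⟪ψ, φ⟫_ℂ * ⟪φ, ψ⟫_ℂ = 1 / 2 := by
    rw [hψφ, hφψ]; linear_combination (-1 / 4 : ℂ) * I_sq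
  rw [gweak, trace_proj_mul_depolarized hψ hunb]
  simp only [depolarized, proj_eq_vecMulVec, Matrix.mul_add, Matrix.mul_smul, Matrix.smul_mul,
    Matrix.mul_one, vecMulVec_star_mul_vecMulVec_star, smul_smul, trace_add, trace_smul,
    trace_vecMulVec_star, smul_eq_mul, hφψ]
  linear_combination 2 * p * hγψ + (1 - 2 * p) * (1 + I) * hγφ

end WeakValues

section Superposition

variable {E : Type*} [NormedAddCommGroup E] [InnerProductSpace ℂ E]

def superpos (γ γ' : E) (e : ℂ) : E := ((Real.sqrt 2 : ℝ) : ℂ)⁻¹ • (γ + e • γ')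

lemma inv_sqrt_two_mul_self : ((Real.sqrt 2 : ℝ) : ℂ)⁻¹ * ((Real.sqrt 2 : ℝ) : ℂ)⁻¹ = 1 / 2 := by
  rw [← mul_inv, ← ofReal_mul, Real.mul_self_sqrt zero_le_two]
  norm_num

lemma inner_superpos_superpos {γ γ' : E} (hγ : ‖γ‖ = 1) (hγ' : ‖γ'‖ = 1) (horth : ⟪γ, γ'⟫_ℂ = 0)
    (e f : ℂ) : ⟪superpos γ γ' e, superpos γ γ' f⟫_ℂ = (1 + conj e * f) / 2 := by
  simp only [superpos, inner_smul_left, inner_smul_right, inner_add_left, inner_add_right,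
    inner_self_eq_one_of_norm_eq_one hγ, inner_self_eq_one_of_norm_eq_one hγ', horth,
    inner_eq_zero_symm.mp horth, conj_ofReal, map_inv₀, mul_one, mul_zero, add_zero, zero_add]
  linear_combination (1 + conj e * f) * inv_sqrt_two_mul_self

lemma inner_superpos_mul_inner_superpos {γ γ' : E} (hγ : ‖γ‖ = 1) (horth : ⟪γ, γ'⟫_ℂ = 0)
    (e f : ℂ) : ⟪superpos γ γ' e, γ⟫_ℂ * ⟪γ, superpos γ γ' f⟫_ℂ = 1 / 2 := by
  simp only [superpos, inner_smul_left, inner_smul_right, inner_add_left, inner_add_right,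
    inner_self_eq_one_of_norm_eq_one hγ, horth, inner_eq_zero_symm.mp horth, conj_ofReal,
    map_inv₀, mul_one, mul_zero, add_zero]
  linear_combination inv_sqrt_two_mul_self

lemma inner_superpos_self {γ γ' : E} (hγ : ‖γ‖ = 1) (hγ' : ‖γ'‖ = 1) (horth : ⟪γ, γ'⟫_ℂ = 0)
    {e : ℂ} (he : ‖e‖ = 1) : ⟪superpos γ γ' e, superpos γ γ' e⟫_ℂ = 1 := by
  rw [inner_superpos_superpos hγ hγ' horth, conj_mul', he]
  norm_num

lemma inner_superpos_I_mul_superpos {γ γ' : E} (hγ : ‖γ‖ = 1) (hγ' : ‖γ'‖ = 1)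
    (horth : ⟪γ, γ'⟫_ℂ = 0) {e : ℂ} (he : ‖e‖ = 1) :
    ⟪superpos γ γ' (I * e), superpos γ γ' e⟫_ℂ = (1 - I) / 2 := by
  rw [inner_superpos_superpos hγ hγ' horth, map_mul, conj_I, mul_assoc, conj_mul', he]
  push_cast
  ring

lemma inner_superpos_superpos_I_mul {γ γ' : E} (hγ : ‖γ‖ = 1) (hγ' : ‖γ'‖ = 1)
    (horth : ⟪γ, γ'⟫_ℂ = 0) {e : ℂ} (he : ‖e‖ = 1) :
    ⟪superpos γ γ' e, superpos γ γ' (I * e)⟫_ℂ = (1 + I) / 2 := by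
  rw [inner_superpos_superpos hγ hγ' horth, mul_left_comm, conj_mul', he]
  push_cast
  ring

end Superposition

lemma abs_one_sub_two_mul_div_two_lt {p : ℝ} (hp : p ∈ Set.Ico (0 : ℝ) 1) :
    |(1 - 2 * p) / 2| < |(1 + Real.sqrt 2 * (1 - p)) / 2| := by
  obtain ⟨hp0, hp1⟩ := hp
  have hpos : 0 < Real.sqrt 2 * (1 - p) := mul_pos (by positivity) (by linarith)
  rw [abs_of_pos (a := (1 + Real.sqrt 2 * (1 - p)) / 2) (by linarith), abs_lt]
  constructor <;> linarith

/-- for mutually unbiased pre- and post-selection and depolarizing noise of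
strength `p ∈ [0,1)`, `|Re(W_{ρ,ψ}(H⁺))| > |Im(W_{ρ,ψ}(|γ⟩⟨γ|))|`. -/
theorem stmt16 (γ γperp : EuclideanSpace ℂ (Fin 2))
    (hγ : ‖γ‖ = 1) (hγp : ‖γperp‖ = 1) (horth : (inner ℂ γ γperp : ℂ) = 0)
    (θ : ℝ)
    (φ ψ : EuclideanSpace ℂ (Fin 2))
    (hφ : φ = (Real.sqrt 2 : ℂ)⁻¹ • (γ + Complex.exp (θ * Complex.I) • γperp))
    (hψ : ψ = (Real.sqrt 2 : ℂ)⁻¹ •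
        (γ + Complex.exp ((θ + Real.pi / 2) * Complex.I) • γperp))
    (φperp : EuclideanSpace ℂ (Fin 2))
    (hφperp : ‖φperp‖ = 1) (horth' : (inner ℂ φ φperp : ℂ) = 0)
    (p : ℝ) (hp : p ∈ Set.Ico (0 : ℝ) 1)
    (ρ : Matrix (Fin 2) (Fin 2) ℂ)
    (hρ : ρ = ((1 - p : ℝ) : ℂ) • proj φ + ((p : ℝ) : ℂ) • proj φperp)
    (H : Matrix (Fin 2) (Fin 2) ℂ)
    (hH : H = (((1 - Real.sqrt 2) / 2 : ℝ) : ℂ) • (1 : Matrix (Fin 2) (Fin 2) ℂ)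
        + ((Real.sqrt 2 / 2 : ℝ) : ℂ) • (proj φ + proj ψ)) :
    |(gweak ρ ψ H).re| > |(gweak ρ ψ (proj γ)).im| := by
  set e := exp (θ * I)
  have he : ‖e‖ = 1 := norm_exp_ofReal_mul_I θ
  replace hφ : φ = superpos γ γperp e := hφ
  replace hψ : ψ = superpos γ γperp (I * e) := by
    rw [hψ, add_mul, exp_add, exp_pi_div_two_mul_I, mul_comm]; rfl
  have hφφ : ⟪φ, φ⟫_ℂ = 1 := hφ ▸ inner_superpos_self hγ hγp horth he
  have hψψ : ⟪ψ, ψ⟫_ℂ = 1 := hψ ▸ inner_superpos_self hγ hγp horth (by simp [he])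
  have hψφ : ⟪ψ, φ⟫_ℂ = (1 - I) / 2 := hψ ▸ hφ ▸ inner_superpos_I_mul_superpos hγ hγp horth he
  have hφψ : ⟪φ, ψ⟫_ℂ = (1 + I) / 2 := hψ ▸ hφ ▸ inner_superpos_superpos_I_mul hγ hγp horth he
  have hunb : ⟪ψ, φ⟫_ℂ * ⟪φ, ψ⟫_ℂ = 1 / 2 := by
    rw [hψφ, hφψ]; linear_combination (-1 / 4 : ℂ) * I_sq
  have hφ₁ : ‖φ‖ = 1 := by
    rw [norm_eq_sqrt_re_inner (𝕜 := ℂ) φ, hφφ, RCLike.one_re, Real.sqrt_one]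
  have hρ' : ρ = depolarized φ p := by
    rw [hρ, ofReal_sub, ofReal_one, one_sub_smul_proj_add_smul_proj hφ₁ hφperp horth']
  have hWH : gweak ρ ψ H = ((1 + Real.sqrt 2 * (1 - p)) / 2 : ℝ) := by
    rw [hρ', hH, gweak_depolarized_smul_one_add_smul hφφ hψψ hunb]; push_cast; ring
  have hWγ : (gweak ρ ψ (proj γ)).im = (1 - 2 * p) / 2 := by
    rw [hρ', gweak_depolarized_proj hψψ hψφ hφψ
      (hψ ▸ inner_superpos_mul_inner_superpos hγ horth _ _)
      (hψ ▸ hφ ▸ inner_superpos_mul_inner_superpos hγ horth _ _)]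
    simp
  rw [hWH, ofReal_re, hWγ]
  exact abs_one_sub_two_mul_div_two_lt hp
end
end

section
/- Let φ and ψ be unit vectors in ℂ² that are linearly independent and satisfy ⟨ψ, φ⟩ ≠ 0, let I be the 2×2 identity matrix, and set P_{φ,ψ} := (1/2)(|φ⟩⟨φ| + |ψ⟩⟨ψ| − I). Then for a real number s, the matrix s·P_{φ,ψ} + I/2 is a rank-one orthogonal projection (Hermitian, idempotent, of trace 1) if and only if s = 1/|⟨φ, ψ⟩| or s = −1/|⟨φ, ψ⟩|. -/
noncomputable section

/-!
The matrix `A = |φ⟩⟨φ| + |ψ⟩⟨ψ| - I` is Hermitian and traceless, and for unit vectors in `ℂ²` it squares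
to the scalar `|⟨φ, ψ⟩|² I`. Hence `Q = s P_{φ,ψ} + I/2` is always Hermitian of trace `1`, and
`Q² = (s² |⟨φ, ψ⟩|² + 1) / 4 • I + s P_{φ,ψ}`, so `Q² = Q` exactly when `s² |⟨φ, ψ⟩|² = 1`.
-/

theorem smul_add_half_mul_self_eq_iff {K A : Type*} [Field K] [CharZero K] [Ring A]
    [Algebra K A] [Nontrivial A] {P : A} {c : K} (hP : P * P = (c / 4) • 1) (s : K) :
    (s • P + (1 / 2 : K) • 1) * (s • P + (1 / 2 : K) • 1) = s • P + (1 / 2 : K) • 1 ↔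
      s ^ 2 * c = 1 := by
  have hexpand : (s • P + (1 / 2 : K) • (1 : A)) * (s • P + (1 / 2 : K) • 1)
      = ((s ^ 2 * c + 1) / 4) • 1 + s • P := by
    simp only [add_mul, mul_add, smul_mul_smul, mul_one, one_mul, hP, smul_smul]
    module
  rw [hexpand, add_comm _ (s • P), add_right_inj, ← sub_eq_zero, ← sub_smul, smul_eq_zero,
    sub_eq_zero]
  simp only [one_ne_zero, or_false]
  constructor
  · intro h
    linear_combination (4 : K) * h
  · intro h
    linear_combination h / 4

theorem sq_mul_sq_eq_one_iff {K : Type*} [Field K] {r : K} (hr : r ≠ 0) (s : K) :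
    s ^ 2 * r ^ 2 = 1 ↔ s = 1 / r ∨ s = -(1 / r) := by
  rw [← mul_pow, sq_eq_one_iff, ← eq_div_iff hr, ← neg_div, ← eq_div_iff hr]

theorem proj_isHermitian (v : EuclideanSpace ℂ (Fin 2)) : (proj v).IsHermitian := by
  ext i j
  simp [proj, mul_comm]

theorem trace_proj (v : EuclideanSpace ℂ (Fin 2)) : (proj v).trace = inner ℂ v v := by
  simp only [proj, Matrix.trace, Matrix.diag, Matrix.of_apply, PiLp.inner_apply,
    RCLike.inner_apply, Fin.sum_univ_two, Complex.star_def]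

theorem proj_add_proj_sub_one_mul_self {φ ψ : EuclideanSpace ℂ (Fin 2)}
    (hφ : ‖φ‖ = 1) (hψ : ‖ψ‖ = 1) :
    (proj φ + proj ψ - 1) * (proj φ + proj ψ - 1) = (‖(inner ℂ φ ψ : ℂ)‖ : ℂ) ^ 2 • 1 := by
  have hφφ : (inner ℂ φ φ : ℂ) = 1 := by simp [inner_self_eq_norm_sq_to_K, hφ]
  have hψψ : (inner ℂ ψ ψ : ℂ) = 1 := by simp [inner_self_eq_norm_sq_to_K, hψ]
  rw [← Complex.mul_conj']
  simp only [PiLp.inner_apply, RCLike.inner_apply, Fin.sum_univ_two] at hφφ hψψ ⊢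
  ext i j
  fin_cases i <;> fin_cases j <;>
    simp [Matrix.mul_apply, proj, Fin.sum_univ_two, Matrix.one_apply]
  · linear_combination (φ 0 * (starRingEnd ℂ) (φ 0) + ψ 0 * (starRingEnd ℂ) (ψ 0) - 1) * hφφ
        + (ψ 0 * (starRingEnd ℂ) (ψ 0) - φ 1 * (starRingEnd ℂ) (φ 1)) * hψψ
  · linear_combination (φ 0 * (starRingEnd ℂ) (φ 1) + ψ 0 * (starRingEnd ℂ) (ψ 1)) * (hφφ + hψψ)
  · linear_combination (φ 1 * (starRingEnd ℂ) (φ 0) + ψ 1 * (starRingEnd ℂ) (ψ 0)) * (hφφ + hψψ)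
  · linear_combination (φ 1 * (starRingEnd ℂ) (φ 1) + ψ 1 * (starRingEnd ℂ) (ψ 1) - 1) * hφφ
        + (ψ 1 * (starRingEnd ℂ) (ψ 1) - φ 0 * (starRingEnd ℂ) (φ 0)) * hψψ

theorem stmt19_general (φ ψ : EuclideanSpace ℂ (Fin 2))
    (hφ : ‖φ‖ = 1) (hψ : ‖ψ‖ = 1)
    (hno : (inner ℂ ψ φ : ℂ) ≠ 0)
    (P : Matrix (Fin 2) (Fin 2) ℂ)
    (hP : P = (1 / 2 : ℂ) • (proj φ + proj ψ - (1 : Matrix (Fin 2) (Fin 2) ℂ)))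
    (s : ℝ) :
    (((s : ℂ) • P + (1 / 2 : ℂ) • (1 : Matrix (Fin 2) (Fin 2) ℂ)).IsHermitian ∧
      ((s : ℂ) • P + (1 / 2 : ℂ) • (1 : Matrix (Fin 2) (Fin 2) ℂ))
        * ((s : ℂ) • P + (1 / 2 : ℂ) • (1 : Matrix (Fin 2) (Fin 2) ℂ))
        = (s : ℂ) • P + (1 / 2 : ℂ) • (1 : Matrix (Fin 2) (Fin 2) ℂ) ∧
      ((s : ℂ) • P + (1 / 2 : ℂ) • (1 : Matrix (Fin 2) (Fin 2) ℂ)).trace = 1) ↔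
      (s = 1 / ‖(inner ℂ φ ψ : ℂ)‖ ∨ s = -(1 / ‖(inner ℂ φ ψ : ℂ)‖)) := by
  have hw : ‖(inner ℂ φ ψ : ℂ)‖ ≠ 0 := by
    rwa [norm_ne_zero_iff, ← inner_conj_symm, map_ne_zero]
  have hhalf : IsSelfAdjoint (1 / 2 : ℂ) := by simp [IsSelfAdjoint]
  have hPH : P.IsHermitian := hP ▸
    (((proj_isHermitian φ).add (proj_isHermitian ψ)).sub Matrix.isHermitian_one).smul hhalf
  have hPtr : P.trace = 0 := by
    norm_num [hP, Matrix.trace_sub, trace_proj, inner_self_eq_norm_sq_to_K, hφ, hψ]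
  have hPsq : P * P = (((‖(inner ℂ φ ψ : ℂ)‖ ^ 2 : ℝ) : ℂ) / 4) • 1 := by
    rw [hP, smul_mul_smul, proj_add_proj_sub_one_mul_self hφ hψ, smul_smul]
    push_cast
    ring_nf
  have hherm : ((s : ℂ) • P + (1 / 2 : ℂ) • (1 : Matrix (Fin 2) (Fin 2) ℂ)).IsHermitian :=
    (hPH.smul (Complex.conj_ofReal s)).add (Matrix.isHermitian_one.smul hhalf)
  have htr : ((s : ℂ) • P + (1 / 2 : ℂ) • (1 : Matrix (Fin 2) (Fin 2) ℂ)).trace = 1 := by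
    simp [hPtr]
  rw [smul_add_half_mul_self_eq_iff hPsq, ← sq_mul_sq_eq_one_iff hw]
  simp only [hherm, htr, true_and, and_true]
  exact_mod_cast Iff.rfl

/-- with `P_{φ,ψ} = (1/2)(|φ⟩⟨φ| + |ψ⟩⟨ψ| - I)`, the matrix
`s P_{φ,ψ} + I/2` is a rank-one orthogonal projection iff `s = ±1/|⟨φ,ψ⟩|`. -/
theorem stmt19 (φ ψ : EuclideanSpace ℂ (Fin 2))
    (hφ : ‖φ‖ = 1) (hψ : ‖ψ‖ = 1)
    (hind : LinearIndependent ℂ ![φ, ψ])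
    (hno : (inner ℂ ψ φ : ℂ) ≠ 0)
    (P : Matrix (Fin 2) (Fin 2) ℂ)
    (hP : P = (1 / 2 : ℂ) • (proj φ + proj ψ - (1 : Matrix (Fin 2) (Fin 2) ℂ)))
    (s : ℝ) :
    (((s : ℂ) • P + (1 / 2 : ℂ) • (1 : Matrix (Fin 2) (Fin 2) ℂ)).IsHermitian ∧
      ((s : ℂ) • P + (1 / 2 : ℂ) • (1 : Matrix (Fin 2) (Fin 2) ℂ))
        * ((s : ℂ) • P + (1 / 2 : ℂ) • (1 : Matrix (Fin 2) (Fin 2) ℂ))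
        = (s : ℂ) • P + (1 / 2 : ℂ) • (1 : Matrix (Fin 2) (Fin 2) ℂ) ∧
      ((s : ℂ) • P + (1 / 2 : ℂ) • (1 : Matrix (Fin 2) (Fin 2) ℂ)).trace = 1) ↔
      (s = 1 / ‖(inner ℂ φ ψ : ℂ)‖ ∨ s = -(1 / ‖(inner ℂ φ ψ : ℂ)‖)) :=
  stmt19_general φ ψ hφ hψ hno P hP s
end
end
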